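/- For the operators S_i on the vector space with basis {v_k : k ∈ ℤ} defined by S_i v_k = k v_{i+k} for k ≠ −i and S_i v_{−i} = −i(i+a) v_0 (for a fixed complex parameter a), one has S_i S_j − S_j S_i = (j−i) S_{i+j} for all i, j ∈ ℤ; that is, the module B(a) is a representation of the Witt algebra. -/
import Mathlib


/-- The operator `S i` of the module `B(a)` over the Witt algebra, on the space with
basis `{v k : k ∈ ℤ}` (here `v k` is `Finsupp.single k 1`):
`S i v k = k v (i+k)` for `k ≠ −i`, and `S i v (−i) = −i(i+a) v 0`. -/
noncomputable def Bop (a : ℂ) (i : ℤ) : (ℤ →₀ ℂ) →ₗ[ℂ] (ℤ →₀ ℂ) :=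
  Finsupp.lsum ℂ fun k : ℤ =>
    (if k = -i then -(i : ℂ) * (i + a) else (k : ℂ)) • Finsupp.lsingle (i + k)

lemma Bop_single (a : ℂ) (i k : ℤ) :
    Bop a i (Finsupp.single k 1) =
      (if k = -i then -(i : ℂ) * (i + a) else (k : ℂ)) • Finsupp.single (i + k) 1 := by
  rw [Bop, Finsupp.lsum_single]
  simp only [LinearMap.smul_apply, Finsupp.lsingle_apply]

/-- `S i S j − S j S i = (j − i) S (i+j)`: the module `B(a)` is a representation of
the centerless Virasoro (Witt) algebra. -/
theorem Bop_comm (a : ℂ) (i j : ℤ) :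
    Bop a i ∘ₗ Bop a j - Bop a j ∘ₗ Bop a i = ((j : ℂ) - i) • Bop a (i + j) := by
  apply Finsupp.lhom_ext
  intro k c
  have hc : (Finsupp.single k c : ℤ →₀ ℂ) = c • Finsupp.single k 1 := by
    rw [Finsupp.smul_single, smul_eq_mul, mul_one]
  simp only [hc, map_smul, LinearMap.sub_apply, LinearMap.comp_apply, LinearMap.smul_apply]
  congr 1
  rw [Bop_single, map_smul, Bop_single, Bop_single, map_smul, Bop_single, Bop_single]
  rw [smul_smul, smul_smul, smul_smul, show i + (j + k) = (i + j) + k by ring,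
    show j + (i + k) = (i + j) + k by ring, ← sub_smul]
  congr 1
  have hij : (j + k = -i) ↔ (k = -(i+j)) := by omega
  have hji : (i + k = -j) ↔ (k = -(i+j)) := by omega
  simp only [hij, hji]
  by_cases h1 : k = -(i + j) <;> by_cases h2 : k = -j <;> by_cases h3 : k = -i <;>
    simp only [h1, h2, h3, if_true, if_false, if_pos, if_neg] <;>
    simp_all <;> push_cast <;> ring
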